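/- arXiv:1609.02596 — 6 statements merged into one kernel-verified Lean document; each statement's English description precedes it below -/
import Mathlib

section
/- An interior profile characterizes the Nash equilibrium by the first-order conditions: a profile q* with q*_m > 0 for every m is a Nash equilibrium of the content providers' game if and only if q*_m = 1/π − 1 − J*_m/α_m for every m, where J*_m = Σ_{l≠m} q*_l; equivalently, if and only if q*_m + (1/α_m)·Σ_{l≠m} q*_l = 1/π − 1 for every m. -/
open Finset

/-- Content provider `m`'s utility given the profile `q` of requested
quantities: `u_m(q) = log(1 + q_m/(1 + J_m/α_m)) − π·q_m`, where
`J_m = Σ_{l≠m} q_l`. -/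
noncomputable def cpUtility {M : ℕ} (α : Fin M → ℝ) (π : ℝ) (q : Fin M → ℝ)
    (m : Fin M) : ℝ :=
  Real.log (1 + q m / (1 + (∑ l ∈ Finset.univ.erase m, q l) / α m)) - π * q m

/-- A profile `q` with nonnegative components is a Nash equilibrium if for
every `m`, `q m` maximizes `x ↦ u_m(x, q_{−m})` over `x ≥ 0`. -/
def IsNashEq {M : ℕ} (α : Fin M → ℝ) (π : ℝ) (q : Fin M → ℝ) : Prop :=
  (∀ m, 0 ≤ q m) ∧
  ∀ m, ∀ x : ℝ, 0 ≤ x →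
    cpUtility α π (Function.update q m x) m ≤ cpUtility α π q m

/-!
With the rivals' quantities fixed, provider `m` maximizes `x ↦ log (1 + x / c) - π x` on
`x ≥ 0`, where `c = 1 + J_m / α_m > 0`. This function is concave, so an interior point
maximizes it iff its derivative `1 / (c + x) - π` vanishes there, i.e. iff `x = 1/π - c`:
necessity is Fermat's theorem, sufficiency the tangent-line bound `log y ≤ y - 1` at
`y = π (c + x)`.
-/

lemma log_one_add_div_sub_mul_le {c π x : ℝ} (hc : 0 < c) (hπ : 0 < π) (hx : 0 < c + x) :
    Real.log (1 + x / c) - π * x ≤ π * c - 1 - Real.log (π * c) := by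
  have hsplit : Real.log (1 + x / c) = Real.log (π * (c + x)) - Real.log (π * c) := by
    rw [← Real.log_div (by positivity) (by positivity)]
    congr 1
    field_simp
  have htangent := Real.log_le_sub_one_of_pos (mul_pos hπ hx)
  linarith

lemma hasDerivAt_log_one_add_div_sub_mul {c π t : ℝ} (hc : 0 < c) (ht : 0 < c + t) :
    HasDerivAt (fun x => Real.log (1 + x / c) - π * x) (1 / (c + t) - π) t := by
  have hpos : 0 < 1 + t / c := by rw [one_add_div hc.ne']; positivity
  have hderiv := ((((hasDerivAt_id' t).div_const c).const_add 1).log hpos.ne').sub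
    ((hasDerivAt_id' t).const_mul π)
  refine hderiv.congr_deriv ?_
  field_simp

lemma isMaxOn_log_one_add_div_sub_mul_iff {c π t : ℝ} (hc : 0 < c) (hπ : 0 < π) (ht : 0 < t) :
    IsMaxOn (fun x => Real.log (1 + x / c) - π * x) (Set.Ici 0) t ↔ t = 1 / π - c := by
  constructor
  · intro hmax
    have hzero := (hmax.isLocalMax (Ici_mem_nhds ht)).hasDerivAt_eq_zero
      (hasDerivAt_log_one_add_div_sub_mul hc (by linarith))
    have : π * (c + t) = 1 := by field_simp at hzero; linarith
    field_simp
    linarith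
  · rintro rfl
    refine isMaxOn_iff.mpr fun x (hx : 0 ≤ x) => ?_
    have hvalue :
        Real.log (1 + (1 / π - c) / c) - π * (1 / π - c) = π * c - 1 - Real.log (π * c) := by
      rw [show 1 + (1 / π - c) / c = (π * c)⁻¹ by field_simp; ring, Real.log_inv]
      field_simp
      ring
    simpa only [hvalue] using log_one_add_div_sub_mul_le hc hπ (by linarith)

lemma cpUtility_update_self {M : ℕ} (α : Fin M → ℝ) (π : ℝ) (q : Fin M → ℝ)
    (m : Fin M) (x : ℝ) :
    cpUtility α π (Function.update q m x) m =
      Real.log (1 + x / (1 + (∑ l ∈ univ.erase m, q l) / α m)) - π * x := by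
  have hrivals : ∑ l ∈ univ.erase m, Function.update q m x l = ∑ l ∈ univ.erase m, q l :=
    sum_congr rfl fun l hl => Function.update_of_ne (ne_of_mem_erase hl) _ _
  rw [cpUtility, hrivals, Function.update_self]

lemma isNashEq_iff_isMaxOn {M : ℕ} (α : Fin M → ℝ) (π : ℝ) (q : Fin M → ℝ) :
    IsNashEq α π q ↔ (∀ m, 0 ≤ q m) ∧ ∀ m,
      IsMaxOn (fun x => Real.log (1 + x / (1 + (∑ l ∈ univ.erase m, q l) / α m)) - π * x)
        (Set.Ici 0) (q m) := by
  refine and_congr_right fun _ => forall_congr' fun m => ?_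
  simp only [isMaxOn_iff, Set.mem_Ici, ← cpUtility_update_self, Function.update_eq_self]

theorem interior_nash_iff_first_order_general (M : ℕ) (α : Fin M → ℝ)
    (hα : ∀ m, 0 < α m) (π : ℝ) (hπ : π ∈ Set.Ioo (0 : ℝ) 1)
    (q : Fin M → ℝ) (hq : ∀ m, 0 < q m) :
    (IsNashEq α π q ↔
      ∀ m, q m = 1 / π - 1 - (∑ l ∈ Finset.univ.erase m, q l) / α m) ∧
    (IsNashEq α π q ↔
      ∀ m, q m + (1 / α m) * ∑ l ∈ Finset.univ.erase m, q l = 1 / π - 1) := by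
  have hc : ∀ m, 0 < 1 + (∑ l ∈ univ.erase m, q l) / α m := fun m => by
    have := sum_nonneg fun l (_ : l ∈ univ.erase m) => (hq l).le
    have := hα m
    positivity
  have hfirst :
      IsNashEq α π q ↔ ∀ m, q m = 1 / π - 1 - (∑ l ∈ univ.erase m, q l) / α m := by
    simp only [isNashEq_iff_isMaxOn, fun m => (hq m).le, implies_true, true_and]
    refine forall_congr' fun m => ?_
    rw [isMaxOn_log_one_add_div_sub_mul_iff (hc m) hπ.1 (hq m)]
    constructor <;> intro h <;> linarith
  refine ⟨hfirst, hfirst.trans (forall_congr' fun m => ?_)⟩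
  rw [one_div_mul_eq_div]
  constructor <;> intro h <;> linarith

/-- an interior profile `q*` (with `q*_m > 0` for every `m`) is a
Nash equilibrium of the content providers' game if and only if
`q*_m = 1/π − 1 − J*_m/α_m` for every `m`, where `J*_m = Σ_{l≠m} q*_l`;
equivalently, if and only if `q*_m + (1/α_m)·Σ_{l≠m} q*_l = 1/π − 1` for
every `m`. -/
theorem interior_nash_iff_first_order (M : ℕ) (hM : 2 ≤ M) (α : Fin M → ℝ)
    (hα : ∀ m, 0 < α m) (π : ℝ) (hπ : π ∈ Set.Ioo (0 : ℝ) 1)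
    (q : Fin M → ℝ) (hq : ∀ m, 0 < q m) :
    (IsNashEq α π q ↔
      ∀ m, q m = 1 / π - 1 - (∑ l ∈ Finset.univ.erase m, q l) / α m) ∧
    (IsNashEq α π q ↔
      ∀ m, q m + (1 / α m) * ∑ l ∈ Finset.univ.erase m, q l = 1 / π - 1) :=
  interior_nash_iff_first_order_general M α hα π hπ q hq
end

section
/- The determinant of the best-response matrix admits the closed form det(D(α)) = (1 − ((1 − α_1)/α_1)·Σ_{l=2}^{M} 1/(α_l − 1)) · ∏_{l=2}^{M} (1 − 1/α_l), for any M ≥ 2 and any reals α_1, …, α_M with α_l ≠ 0 and α_l ≠ 1 for all l. -/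
/-!
With `b m = 1/α_m`, the matrix `D(α)` factors as `diag(1 - b) · (1 + w 1ᵀ)`, where
`w m = b m / (1 - b m) = 1/(α_m - 1)`, so the matrix determinant lemma gives
`det D(α) = ∏ (1 - b m) · (1 + ∑ w m)`. The factor `1 - b 0` cancels `1 + w 0`, leaving
`(1 - b 0) · ∑_{m ≠ 0} w m = -((1 - α_0)/α_0) · ∑_{m ≠ 0} 1/(α_m - 1)`.
-/

open Finset

/-- The best-response matrix `D(α)`: diagonal entries equal `1`, and the
entry in row `m`, column `l` (`l ≠ m`) equals `1/α_m`. -/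
noncomputable def brMatrix {M : ℕ} (α : Fin M → ℝ) : Matrix (Fin M) (Fin M) ℝ :=
  Matrix.of fun m l => if m = l then 1 else 1 / α m

namespace Matrix

variable {ι : Type*} [Fintype ι] [DecidableEq ι]

theorem det_one_add_vecMulVec {R : Type*} [CommRing R] (u v : ι → R) :
    (1 + vecMulVec u v).det = 1 + v ⬝ᵥ u := by
  rw [vecMulVec_eq Unit, det_one_add_replicateCol_mul_replicateRow]

variable {K : Type*} [Field K]

theorem of_ite_one_eq_diagonal_mul {b : ι → K} (hb : ∀ i, b i ≠ 1) :
    of (fun i j => if i = j then 1 else b i) =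
      diagonal (fun i => 1 - b i) * (1 + vecMulVec (fun i => b i / (1 - b i)) 1) := by
  ext i j
  have : 1 - b i ≠ 0 := sub_ne_zero.mpr (hb i).symm
  by_cases h : i = j
  · subst h
    simp [diagonal_mul, field]
  · simp [diagonal_mul, h, field]

theorem det_of_ite_one {b : ι → K} (hb : ∀ i, b i ≠ 1) :
    (of fun i j => if i = j then 1 else b i).det =
      (∏ i, (1 - b i)) * (1 + ∑ i, b i / (1 - b i)) := by
  rw [of_ite_one_eq_diagonal_mul hb, det_mul, det_diagonal, det_one_add_vecMulVec,
    one_dotProduct]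

end Matrix

/-- the determinant of the best-response matrix admits the closed
form `det D(α) = (1 − ((1 − α_1)/α_1)·Σ_{l=2}^{M} 1/(α_l − 1)) ·
∏_{l=2}^{M} (1 − 1/α_l)` for any `M ≥ 2` (here `M = n + 2`) and any reals
`α_1, …, α_M` with `α_l ≠ 0` and `α_l ≠ 1` for all `l`. -/
theorem brMatrix_det (n : ℕ) (α : Fin (n + 2) → ℝ)
    (h0 : ∀ l, α l ≠ 0) (h1 : ∀ l, α l ≠ 1) :
    (brMatrix α).det =
      (1 - ((1 - α 0) / α 0) * ∑ l ∈ Finset.univ.erase 0, 1 / (α l - 1)) *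
        ∏ l ∈ Finset.univ.erase 0, (1 - 1 / α l) := by
  have hs : ∀ l, α l - 1 ≠ 0 := fun l => sub_ne_zero.mpr (h1 l)
  have hb : ∀ l, 1 / α l ≠ 1 := fun l => by simpa [eq_comm] using h1 l
  have hw : ∀ l, 1 / α l / (1 - 1 / α l) = 1 / (α l - 1) := fun l => by
    field_simp [h0 l, hs l]
  rw [brMatrix, Matrix.det_of_ite_one hb, ← mul_prod_erase _ _ (mem_univ 0),
    ← add_sum_erase _ _ (mem_univ 0)]
  simp only [hw]
  field_simp [h0 0, hs 0]
  ring
end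

section
/- (Theorem 1, Nash Equilibrium) The vector q* defined componentwise by q*_m = c·a_m·b_m / D satisfies the system of best-response equations q*_m + (1/α_m)·Σ_{l≠m} q*_l = c for every m ∈ {1, …, M}; equivalently, D(α)·q* = c·𝟙 where 𝟙 is the all-ones vector, and q* is the unique such solution since D = det(D(α)) ≠ 0. -/
/-!
Write `β_l = 1/(α_l - 1)`, `P = ∏ (1 - 1/α_l)` and `T = Σ β_l`. Splitting off the excluded
indices from the full sum and product, `a_m b_m = P (1 + T - (M - 1) β_m)` for every `m`
(also for `m = 1`) and `D = P (1 + T)`. The vector `w_m = 1 + T - (M - 1) β_m` satisfies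
`D(α) w = (1 + T) 𝟙`, because `Σ w = M + T` and `(1 + β_m)/α_m = β_m`; hence
`q* = c w / (1 + T)` solves the system. If `D(α) v = 0` and `S = Σ v_l`, each row gives
`v_m = -S β_m`; summing, `S (1 + T) = 0`, so `S = 0` and `v = 0`.
-/

open Finset

/-- The coefficient `a_m` of Theorem 1 (with `M = n + 2` providers, the first
provider indexed by `0` and the last by `Fin.last (n+1)`):
for `m ≠ 1`, `a_m = 1 − 1/α_m − ((1 − α_1)/α_1)·Σ_{l=2,l≠m}^{M} (α_m − α_l)/((α_l − 1)·α_m)`;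
for `m = 1`, `a_1 = 1 − 1/α_1 − ((1 − α_M)/α_M)·Σ_{l=2}^{M−1} (α_1 − α_l)/((α_l − 1)·α_1)`. -/
noncomputable def aCoef (n : ℕ) (α : Fin (n + 2) → ℝ) (m : Fin (n + 2)) : ℝ :=
  if m = 0 then
    1 - 1 / α 0 -
      ((1 - α (Fin.last (n + 1))) / α (Fin.last (n + 1))) *
        ∑ l ∈ (Finset.univ.erase 0).erase (Fin.last (n + 1)),
          (α 0 - α l) / ((α l - 1) * α 0)
  else
    1 - 1 / α m -
      ((1 - α 0) / α 0) *
        ∑ l ∈ (Finset.univ.erase 0).erase m, (α m - α l) / ((α l - 1) * α m)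

/-- The coefficient `b_m` of Theorem 1: for `m ≠ 1`,
`b_m = ∏_{l=2,l≠m}^{M} (1 − 1/α_l)`; for `m = 1`,
`b_1 = ∏_{l=2}^{M−1} (1 − 1/α_l)`. -/
noncomputable def bCoef (n : ℕ) (α : Fin (n + 2) → ℝ) (m : Fin (n + 2)) : ℝ :=
  if m = 0 then
    ∏ l ∈ (Finset.univ.erase 0).erase (Fin.last (n + 1)), (1 - 1 / α l)
  else
    ∏ l ∈ (Finset.univ.erase 0).erase m, (1 - 1 / α l)

/-- The denominator
`D = (1 − ((1 − α_1)/α_1)·Σ_{l=2}^{M} 1/(α_l − 1)) · ∏_{l=2}^{M} (1 − 1/α_l)`. -/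
noncomputable def dDenom (n : ℕ) (α : Fin (n + 2) → ℝ) : ℝ :=
  (1 - ((1 - α 0) / α 0) * ∑ l ∈ Finset.univ.erase 0, 1 / (α l - 1)) *
    ∏ l ∈ Finset.univ.erase 0, (1 - 1 / α l)

section BestResponse

variable {M : ℕ} (α : Fin M → ℝ)

/-- Up to the factor `∏ l, (1 - 1/α_l)`, this is `a_m b_m`, and `D(α)` maps it to a constant. -/
noncomputable def nashProfile (m : Fin M) : ℝ :=
  1 + ∑ l, 1 / (α l - 1) - (M - 1) / (α m - 1)

theorem brMatrix_mulVec_apply (q : Fin M → ℝ) (m : Fin M) :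
    (brMatrix α).mulVec q m = q m + 1 / α m * ∑ l ∈ univ.erase m, q l := by
  rw [Matrix.mulVec, dotProduct, ← add_sum_erase _ _ (mem_univ m), mul_sum]
  simp only [brMatrix, Matrix.of_apply, if_true, one_mul]
  congr 1
  exact sum_congr rfl fun l hl => by rw [if_neg (ne_of_mem_erase hl).symm]

theorem brMatrix_mulVec_nashProfile (hα₀ : ∀ l, α l ≠ 0) (hα₁ : ∀ l, α l - 1 ≠ 0) :
    (brMatrix α).mulVec (nashProfile α) = fun _ => 1 + ∑ l, 1 / (α l - 1) := by
  have hsum : ∑ l, nashProfile α l = M + ∑ l, 1 / (α l - 1) := by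
    simp only [nashProfile, sum_sub_distrib, sum_add_distrib, sum_const, card_univ,
      Fintype.card_fin, nsmul_eq_mul]
    rw [← sum_congr rfl fun l _ => mul_one_div ((M : ℝ) - 1) (α l - 1), ← mul_sum]
    ring
  funext m
  rw [brMatrix_mulVec_apply, sum_erase_eq_sub (mem_univ m), hsum, nashProfile]
  field_simp [hα₀ m, hα₁ m]
  ring

theorem one_add_sum_one_div_sub_one_pos (hα : ∀ l, 1 < α l) : 0 < 1 + ∑ l, 1 / (α l - 1) :=
  add_pos_of_pos_of_nonneg one_pos (sum_nonneg fun l _ => (one_div_pos.2 (sub_pos.2 (hα l))).le)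

theorem brMatrix_mulVec_injective (hα : ∀ l, 1 < α l) :
    Function.Injective (brMatrix α).mulVec := by
  intro u v huv
  rw [← sub_eq_zero]
  set w := u - v
  have hw : ∀ m, w m + 1 / α m * ∑ l ∈ univ.erase m, w l = 0 := fun m => by
    rw [← brMatrix_mulVec_apply, Matrix.mulVec_sub, huv, sub_self, Pi.zero_apply]
  set S := ∑ l, w l
  have hw_eq : ∀ m, w m = -S * (1 / (α m - 1)) := fun m => by
    have := hw m
    rw [sum_erase_eq_sub (mem_univ m)] at this
    have hα₀ : α m ≠ 0 := (zero_lt_one.trans (hα m)).ne'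
    have hα₁ : α m - 1 ≠ 0 := (sub_pos.2 (hα m)).ne'
    field_simp at this ⊢
    linear_combination this
  have hS : S = -S * ∑ l, 1 / (α l - 1) :=
    calc S = ∑ l, -S * (1 / (α l - 1)) := sum_congr rfl fun l _ => hw_eq l
      _ = -S * ∑ l, 1 / (α l - 1) := (mul_sum _ _ _).symm
  have hS0 : S = 0 := by
    refine (mul_eq_zero.1 ?_).resolve_right (one_add_sum_one_div_sub_one_pos α hα).ne'
    linear_combination hS
  funext m
  simp [hw_eq m, hS0]

/-- The right side does not depend on `j`: this is why `a_1 b_1`, built with `j = M`, follows the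
same formula as `a_m b_m`, built with `j = 1`. -/
theorem coef_mul_prod_erase_erase {i j : Fin M} (hij : i ≠ j) (hα₀ : ∀ l, α l ≠ 0)
    (hα₁ : ∀ l, α l - 1 ≠ 0) :
    (1 - 1 / α i - (1 - α j) / α j *
        ∑ l ∈ (univ.erase j).erase i, (α i - α l) / ((α l - 1) * α i)) *
      ∏ l ∈ (univ.erase j).erase i, (1 - 1 / α l)
      = (∏ l, (1 - 1 / α l)) * nashProfile α i := by
  set s := (univ.erase j).erase i
  have hi : i ∈ univ.erase j := mem_erase.2 ⟨hij, mem_univ i⟩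
  have hcard : (#s : ℝ) + 1 + 1 = M := by
    have := congrArg (· + 1) (card_erase_add_one hi)
    simp only [card_erase_add_one (mem_univ j), card_univ, Fintype.card_fin] at this
    exact_mod_cast this
  have hsum : ∑ l ∈ s, (α i - α l) / ((α l - 1) * α i)
      = (1 - 1 / α i) * ∑ l ∈ s, 1 / (α l - 1) - #s * (1 / α i) := by
    rw [mul_sum, ← nsmul_eq_mul, ← sum_const, ← sum_sub_distrib]
    exact sum_congr rfl fun l _ => by field_simp [hα₀ i, hα₁ l]; ring
  have hT : ∑ l, 1 / (α l - 1)
      = 1 / (α j - 1) + (1 / (α i - 1) + ∑ l ∈ s, 1 / (α l - 1)) := by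
    rw [← add_sum_erase _ _ (mem_univ j), ← add_sum_erase _ _ hi]
  have hP : ∏ l, (1 - 1 / α l)
      = (1 - 1 / α j) * ((1 - 1 / α i) * ∏ l ∈ s, (1 - 1 / α l)) := by
    rw [← mul_prod_erase _ _ (mem_univ j), ← mul_prod_erase _ _ hi]
  rw [nashProfile, hsum, hT, hP, ← hcard]
  field_simp [hα₀ i, hα₀ j, hα₁ i, hα₁ j]
  ring

end BestResponse

section ClosedForm

variable {n : ℕ} {α : Fin (n + 2) → ℝ}

theorem aCoef_mul_bCoef (hα₀ : ∀ l, α l ≠ 0) (hα₁ : ∀ l, α l - 1 ≠ 0)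
    (m : Fin (n + 2)) :
    aCoef n α m * bCoef n α m = (∏ l, (1 - 1 / α l)) * nashProfile α m := by
  by_cases hm : m = 0
  · subst hm
    simp only [aCoef, bCoef, if_true]
    rw [erase_right_comm]
    exact coef_mul_prod_erase_erase α Fin.last_pos.ne hα₀ hα₁
  · simp only [aCoef, bCoef, if_neg hm]
    exact coef_mul_prod_erase_erase α hm hα₀ hα₁

theorem dDenom_eq (hα₀ : α 0 ≠ 0) (hα₁ : α 0 - 1 ≠ 0) :
    dDenom n α = (∏ l, (1 - 1 / α l)) * (1 + ∑ l, 1 / (α l - 1)) := by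
  rw [dDenom, ← add_sum_erase _ _ (mem_univ 0), ← mul_prod_erase _ _ (mem_univ 0)]
  field_simp
  ring

end ClosedForm

theorem nash_equilibrium_closed_form_general (n : ℕ) (α : Fin (n + 2) → ℝ)
    (hα : ∀ l, 1 < α l) (c : ℝ) :
    (∀ m, c * aCoef n α m * bCoef n α m / dDenom n α +
        (1 / α m) *
          ∑ l ∈ Finset.univ.erase m, c * aCoef n α l * bCoef n α l / dDenom n α
        = c) ∧
    (brMatrix α).mulVec (fun m => c * aCoef n α m * bCoef n α m / dDenom n α) =
      (fun _ => c) ∧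
    ∀ q : Fin (n + 2) → ℝ, (brMatrix α).mulVec q = (fun _ => c) →
      q = fun m => c * aCoef n α m * bCoef n α m / dDenom n α := by
  have hα₀ : ∀ l, α l ≠ 0 := fun l => (zero_lt_one.trans (hα l)).ne'
  have hα₁ : ∀ l, α l - 1 ≠ 0 := fun l => (sub_pos.2 (hα l)).ne'
  have hP : 0 < ∏ l, (1 - 1 / α l) :=
    prod_pos fun l _ => sub_pos.2 ((div_lt_one (zero_lt_one.trans (hα l))).2 (hα l))
  have hT := one_add_sum_one_div_sub_one_pos α hα
  have hq : (fun m => c * aCoef n α m * bCoef n α m / dDenom n α)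
      = (c / (1 + ∑ l, 1 / (α l - 1))) • nashProfile α := by
    funext m
    rw [Pi.smul_apply, smul_eq_mul, mul_assoc, aCoef_mul_bCoef hα₀ hα₁,
      dDenom_eq (hα₀ 0) (hα₁ 0)]
    field_simp
  have hsol : (brMatrix α).mulVec (fun m => c * aCoef n α m * bCoef n α m / dDenom n α)
      = fun _ => c := by
    rw [hq, Matrix.mulVec_smul, brMatrix_mulVec_nashProfile α hα₀ hα₁]
    funext m
    exact div_mul_cancel₀ c hT.ne'
  exact ⟨fun m => (brMatrix_mulVec_apply α _ m).symm.trans (congrFun hsol m), hsol,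
    fun q hq' => brMatrix_mulVec_injective α hα (hq'.trans hsol.symm)⟩

/-- Theorem 1, Nash Equilibrium: with `c = 1/π − 1`, the vector
`q*` defined componentwise by `q*_m = c·a_m·b_m/D` satisfies the system of
best-response equations `q*_m + (1/α_m)·Σ_{l≠m} q*_l = c` for every `m`;
equivalently, `D(α)·q* = c·𝟙`, and `q*` is the unique such solution since
`D = det D(α) ≠ 0`. -/
theorem nash_equilibrium_closed_form (n : ℕ) (α : Fin (n + 2) → ℝ)
    (hα : ∀ l, 1 < α l) (π : ℝ) (hπ : π ∈ Set.Ioo (0 : ℝ) 1)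
    (c : ℝ) (hc : c = 1 / π - 1) (hD : dDenom n α ≠ 0) :
    (∀ m, c * aCoef n α m * bCoef n α m / dDenom n α +
        (1 / α m) *
          ∑ l ∈ Finset.univ.erase m, c * aCoef n α l * bCoef n α l / dDenom n α
        = c) ∧
    (brMatrix α).mulVec (fun m => c * aCoef n α m * bCoef n α m / dDenom n α) =
      (fun _ => c) ∧
    ∀ q : Fin (n + 2) → ℝ, (brMatrix α).mulVec q = (fun _ => c) →
      q = fun m => c * aCoef n α m * bCoef n α m / dDenom n α :=
  nash_equilibrium_closed_form_general n α hα c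
end

section
/- (Two-provider Nash equilibrium) For M = 2, if α_1·α_2 ≠ 1 then the unique solution of the pair of equations q_1 + q_2/α_1 = c and q_2 + q_1/α_2 = c is q_1^NE = c·(α_1 − 1)·α_2/(α_1·α_2 − 1) and q_2^NE = c·(α_2 − 1)·α_1/(α_1·α_2 − 1). Moreover, if α_1 > 1, α_2 > 1 and 0 < π < 1 (so that c = 1/π − 1 > 0), then q_1^NE > 0 and q_2^NE > 0, and (q_1^NE, q_2^NE) is a Nash equilibrium of the two-provider game. -/
/-- Provider 1's utility in the two-provider game:
`u₁(q₁, q₂) = log(1 + q₁/(1 + q₂/α₁)) − π·q₁`. -/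
noncomputable def u₁ (α₁ π q₁ q₂ : ℝ) : ℝ :=
  Real.log (1 + q₁ / (1 + q₂ / α₁)) - π * q₁

/-- Provider 2's utility in the two-provider game:
`u₂(q₁, q₂) = log(1 + q₂/(1 + q₁/α₂)) − π·q₂`. -/
noncomputable def u₂ (α₂ π q₁ q₂ : ℝ) : ℝ :=
  Real.log (1 + q₂ / (1 + q₁ / α₂)) - π * q₂

/-!
Against a fixed rival quantity, provider `m` maximises `log (D + x) - π x` with
`D = 1 + q_{3-m}/α_m`; this function of `x` is concave with its peak at `D + x = 1/π`,
i.e. `x + q_{3-m}/α_m = c`. So the equilibrium is the solution of the two linear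
first-order conditions, and for `α₁, α₂ > 1` that solution is positive.
-/

lemma Real.log_sub_mul_le_log_inv_sub_one {π y : ℝ} (hπ : 0 < π) (hy : 0 < y) :
    Real.log y - π * y ≤ Real.log π⁻¹ - 1 := by
  have h := Real.log_le_sub_one_of_pos (mul_pos hπ hy)
  rw [Real.log_mul hπ.ne' hy.ne'] at h
  rw [Real.log_inv]
  linarith

lemma u₂_eq_u₁_swap (α π q₁ q₂ : ℝ) : u₂ α π q₁ q₂ = u₁ α π q₂ q₁ := rfl

lemma u₁_le_of_add_div_eq {α π q₁ q₂ x : ℝ} (hπ : 0 < π) (hD : 0 < 1 + q₂ / α)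
    (hq₁ : q₁ + q₂ / α = 1 / π - 1) (hx : 0 ≤ x) : u₁ α π x q₂ ≤ u₁ α π q₁ q₂ := by
  set D := 1 + q₂ / α
  have hsplit : ∀ z, 0 < D + z →
      u₁ α π z q₂ = (Real.log (D + z) - π * (D + z)) + (π * D - Real.log D) := by
    intro z hz
    unfold u₁
    rw [one_add_div hD.ne', Real.log_div hz.ne' hD.ne']
    ring
  have hpeak : D + q₁ = π⁻¹ := by rw [← one_div]; linarith
  rw [hsplit x (by linarith), hsplit q₁ (by rw [hpeak]; positivity), hpeak,
    mul_inv_cancel₀ hπ.ne']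
  linarith [Real.log_sub_mul_le_log_inv_sub_one hπ (show 0 < D + x by linarith)]

lemma add_div_eq_and_add_div_eq_iff {a b c x y : ℝ} (ha : a ≠ 0) (hb : b ≠ 0)
    (hab : a * b ≠ 1) :
    x + y / a = c ∧ y + x / b = c ↔
      x = c * (a - 1) * b / (a * b - 1) ∧ y = c * (b - 1) * a / (a * b - 1) := by
  have hden : a * b - 1 ≠ 0 := sub_ne_zero.mpr hab
  have hden' : b * a - 1 ≠ 0 := by rwa [mul_comm]
  constructor
  · rintro ⟨hx, hy⟩
    have hx' : x * a + y = c * a := by field_simp at hx; linarith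
    have hy' : y * b + x = c * b := by field_simp at hy; linarith
    constructor
    · rw [eq_div_iff hden]; linear_combination b * hx' - hy'
    · rw [eq_div_iff hden]; linear_combination a * hy' - hx'
  · rintro ⟨rfl, rfl⟩
    constructor <;> field_simp <;> ring

/-- Two-provider Nash equilibrium: with `c = 1/π − 1`, if
`α₁·α₂ ≠ 1` then the unique solution of `q₁ + q₂/α₁ = c` and
`q₂ + q₁/α₂ = c` is `q₁^NE = c·(α₁ − 1)·α₂/(α₁·α₂ − 1)` and
`q₂^NE = c·(α₂ − 1)·α₁/(α₁·α₂ − 1)`. Moreover, if `α₁ > 1` and `α₂ > 1`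
(and `0 < π < 1`, so `c > 0`), then `q₁^NE > 0`, `q₂^NE > 0`, and
`(q₁^NE, q₂^NE)` is a Nash equilibrium of the two-provider game. -/
theorem two_provider_nash (α₁ α₂ π : ℝ) (hα₁ : 0 < α₁) (hα₂ : 0 < α₂)
    (hπ : π ∈ Set.Ioo (0 : ℝ) 1) (c : ℝ) (hc : c = 1 / π - 1) :
    (α₁ * α₂ ≠ 1 →
      (c * (α₁ - 1) * α₂ / (α₁ * α₂ - 1) +
          c * (α₂ - 1) * α₁ / (α₁ * α₂ - 1) / α₁ = c ∧
        c * (α₂ - 1) * α₁ / (α₁ * α₂ - 1) +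
          c * (α₁ - 1) * α₂ / (α₁ * α₂ - 1) / α₂ = c) ∧
      ∀ q₁ q₂ : ℝ, q₁ + q₂ / α₁ = c → q₂ + q₁ / α₂ = c →
        q₁ = c * (α₁ - 1) * α₂ / (α₁ * α₂ - 1) ∧
        q₂ = c * (α₂ - 1) * α₁ / (α₁ * α₂ - 1)) ∧
    (1 < α₁ → 1 < α₂ →
      0 < c * (α₁ - 1) * α₂ / (α₁ * α₂ - 1) ∧
      0 < c * (α₂ - 1) * α₁ / (α₁ * α₂ - 1) ∧
      (∀ x : ℝ, 0 ≤ x →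
        u₁ α₁ π x (c * (α₂ - 1) * α₁ / (α₁ * α₂ - 1)) ≤
          u₁ α₁ π (c * (α₁ - 1) * α₂ / (α₁ * α₂ - 1))
            (c * (α₂ - 1) * α₁ / (α₁ * α₂ - 1))) ∧
      (∀ y : ℝ, 0 ≤ y →
        u₂ α₂ π (c * (α₁ - 1) * α₂ / (α₁ * α₂ - 1)) y ≤
          u₂ α₂ π (c * (α₁ - 1) * α₂ / (α₁ * α₂ - 1))
            (c * (α₂ - 1) * α₁ / (α₁ * α₂ - 1)))) := by
  obtain ⟨hπ₀, hπ₁⟩ := hπ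
  have hsystem (hne : α₁ * α₂ ≠ 1) (x y : ℝ) :=
    add_div_eq_and_add_div_eq_iff (c := c) (x := x) (y := y) hα₁.ne' hα₂.ne' hne
  refine ⟨fun hne ↦ ⟨(hsystem hne _ _).2 ⟨rfl, rfl⟩,
    fun q₁ q₂ h₁ h₂ ↦ (hsystem hne q₁ q₂).1 ⟨h₁, h₂⟩⟩,
    fun h₁ h₂ ↦ ?_⟩
  have hc₀ : 0 < c := hc ▸ sub_pos.2 (one_lt_one_div hπ₀ hπ₁)
  have hden : 0 < α₁ * α₂ - 1 := by nlinarith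
  have hα₁' := sub_pos.2 h₁
  have hα₂' := sub_pos.2 h₂
  have hQ₁ : 0 < c * (α₁ - 1) * α₂ / (α₁ * α₂ - 1) := by positivity
  have hQ₂ : 0 < c * (α₂ - 1) * α₁ / (α₁ * α₂ - 1) := by positivity
  obtain ⟨hfoc₁, hfoc₂⟩ := (hsystem (sub_ne_zero.1 hden.ne') _ _).2 ⟨rfl, rfl⟩
  refine ⟨hQ₁, hQ₂, fun x hx ↦ ?_, fun y hy ↦ ?_⟩
  · exact u₁_le_of_add_div_eq hπ₀ (by positivity) (hc ▸ hfoc₁) hx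
  · simp only [u₂_eq_u₁_swap]
    exact u₁_le_of_add_div_eq hπ₀ (by positivity) (hc ▸ hfoc₂) hy
end

section
/- (Proposition 2, Optimal Price) Assume additionally r < t·S². Then π* = (√(r/t) + r)/(S + r) lies in the interval (r/(S + r), 1) and is the unique maximizer of the operator's utility u_o on (r/(S + r), 1): u_o(π*) > u_o(π) for every π in (r/(S + r), 1) with π ≠ π*. -/
/-!
Substituting `q = (S + r)π - r`, which ranges over `(0, S)` as `π` ranges over
`(r/(S + r), 1)`, the utility becomes `t - (t r + 1)/(S + r) - (t q + r/q)/(S + r)`.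
So maximizing `u_o` means minimizing `t q + r/q`, and by AM-GM, with `r = t s²`,
`t q + r/q - 2 t s = t (q - s)²/q`: the unique minimizer is `q = s = √(r/t)`, i.e. `π = π*`.
-/

noncomputable def operatorUtility (S r t π : ℝ) : ℝ :=
  (1 - π) * t - 1 / (S - (1 / π - 1) * r)

section

variable {S r : ℝ}

lemma mem_Ioo_div_iff (hc : 0 < S + r) (π : ℝ) :
    π ∈ Set.Ioo (r / (S + r)) 1 ↔ 0 < (S + r) * π - r ∧ (S + r) * π - r < S := by
  rw [Set.mem_Ioo, div_lt_iff₀' hc, ← mul_lt_iff_lt_one_right hc]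
  constructor <;> rintro ⟨h₁, h₂⟩ <;> constructor <;> linarith

lemma operatorUtility_div_eq (t : ℝ) {q : ℝ} (hc : S + r ≠ 0) (hq : q ≠ 0) (hqr : q + r ≠ 0) :
    operatorUtility S r t ((q + r) / (S + r)) =
      t - (t * r + 1) / (S + r) - (t * q + r / q) / (S + r) := by
  have hd : S - (1 / ((q + r) / (S + r)) - 1) * r = q / ((q + r) / (S + r)) := by
    field_simp
    ring
  rw [operatorUtility, hd]
  field_simp
  ring

end

lemma mul_add_sq_div_lt_of_ne {t s q : ℝ} (ht : 0 < t) (hq : 0 < q) (hqs : q ≠ s) :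
    t * s + t * s ^ 2 / s < t * q + t * s ^ 2 / q := by
  have key : t * q + t * s ^ 2 / q - (t * s + t * s ^ 2 / s) = t * (q - s) ^ 2 / q := by
    field_simp
    ring
  have : 0 < t * (q - s) ^ 2 / q := by
    have := sub_ne_zero.mpr hqs
    positivity
  linarith

/-- Proposition 2, Optimal Price: for `S, r, t > 0` with
`r < t·S²`, the price `π* = (√(r/t) + r)/(S + r)` lies in the interval
`(r/(S + r), 1)` and is the unique maximizer of the operator's utility
`u_o(π) = (1 − π)·t − 1/(S − (1/π − 1)·r)` on `(r/(S + r), 1)`: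
`u_o(π*) > u_o(π)` for every `π` in that interval with `π ≠ π*`. -/
theorem optimal_price_unique_maximizer (S r t : ℝ) (hS : 0 < S) (hr : 0 < r)
    (ht : 0 < t) (h : r < t * S ^ 2) :
    (Real.sqrt (r / t) + r) / (S + r) ∈ Set.Ioo (r / (S + r)) 1 ∧
    ∀ π : ℝ, π ∈ Set.Ioo (r / (S + r)) 1 →
      π ≠ (Real.sqrt (r / t) + r) / (S + r) →
      (1 - π) * t - 1 / (S - (1 / π - 1) * r) <
        (1 - (Real.sqrt (r / t) + r) / (S + r)) * t -
          1 / (S - (1 / ((Real.sqrt (r / t) + r) / (S + r)) - 1) * r) := by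
  set s := Real.sqrt (r / t)
  have hs : 0 < s := Real.sqrt_pos.mpr (div_pos hr ht)
  have hts : t * s ^ 2 = r := by rw [Real.sq_sqrt (div_pos hr ht).le]; field_simp
  have hsS : s < S := (pow_lt_pow_iff_left₀ hs.le hS.le two_ne_zero).mp (by nlinarith)
  have hc : 0 < S + r := by positivity
  have h_star : (s + r) / (S + r) ∈ Set.Ioo (r / (S + r)) 1 := by
    rw [mem_Ioo_div_iff hc, mul_div_cancel₀ _ hc.ne', add_sub_cancel_right]
    exact ⟨hs, hsS⟩
  refine ⟨h_star, fun π hπ hne => ?_⟩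
  set q := (S + r) * π - r
  have hq : 0 < q := ((mem_Ioo_div_iff hc π).mp hπ).1
  have hπ_eq : π = (q + r) / (S + r) := by field_simp; ring
  have hqs : q ≠ s := fun h_eq => hne (by rw [hπ_eq, h_eq])
  have h_amgm : t * s + r / s < t * q + r / q := hts ▸ mul_add_sq_div_lt_of_ne ht hq hqs
  change operatorUtility S r t π < operatorUtility S r t ((s + r) / (S + r))
  rw [hπ_eq, operatorUtility_div_eq t hc.ne' hq.ne' (by positivity),
    operatorUtility_div_eq t hc.ne' hs.ne' (by positivity)]
  exact sub_lt_sub_left (div_lt_div_of_pos_right h_amgm hc) _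
end

section
/- The first-order condition of the operator has a unique solution in the feasible price range: if r < t·S², then the equation r/(S·π − (1 − π)·r)² = t has exactly one solution π in the interval (r/(S + r), 1), namely π = (√(r/t) + r)/(S + r). -/
/-!
The left-hand side of the first-order condition depends on the price only through the
effective capacity `S * π - (1 - π) * r = (S + r) * π - r`, an increasing affine function of `π`
which is positive exactly on the feasible range `π > r / (S + r)`. For positive `X` the equation
`r / X ^ 2 = t` has the single solution `X = √(r / t)`, and solving the affine equation for `π`
gives the price; `r < t * S ^ 2` says `√(r / t) < S`, which puts it below `1`.
-/

open Set

lemma div_sq_eq_iff_eq_sqrt {a b x : ℝ} (hb : 0 < b) (hx : 0 < x) :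
    a / x ^ 2 = b ↔ x = √(a / b) := by
  rw [eq_comm (a := x), Real.sqrt_eq_iff_mul_self_eq_of_pos hx, eq_div_iff hb.ne',
    div_eq_iff (pow_ne_zero 2 hx.ne')]
  constructor <;> intro h <;> linear_combination -h

lemma sqrt_div_lt_of_lt_mul_sq {r t S : ℝ} (ht : 0 < t) (hS : 0 < S) (h : r < t * S ^ 2) :
    √(r / t) < S := by
  rw [Real.sqrt_lt' hS, div_lt_iff₀ ht]
  linarith

section EffectiveCapacity

variable {S r : ℝ}

lemma effective_capacity_eq (π : ℝ) : S * π - (1 - π) * r = (S + r) * π - r := by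
  ring

lemma effective_capacity_pos (hSr : 0 < S + r) {π : ℝ} (hπ : r / (S + r) < π) :
    0 < S * π - (1 - π) * r := by
  rw [div_lt_iff₀' hSr] at hπ
  rw [effective_capacity_eq]
  linarith

lemma effective_capacity_eq_iff (hSr : 0 < S + r) (π x : ℝ) :
    S * π - (1 - π) * r = x ↔ π = (x + r) / (S + r) := by
  rw [effective_capacity_eq, eq_div_iff hSr.ne']
  constructor <;> intro h <;> linarith

lemma add_div_mem_Ioo (hSr : 0 < S + r) {x : ℝ} (hx₀ : 0 < x) (hxS : x < S) :
    (x + r) / (S + r) ∈ Ioo (r / (S + r)) 1 :=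
  ⟨div_lt_div_of_pos_right (by linarith) hSr, (div_lt_one hSr).2 (by linarith)⟩

end EffectiveCapacity

/-- the first-order condition of the operator has a unique
solution in the feasible price range: if `r < t·S²` (with `S, r, t > 0`),
then the equation `r/(S·π − (1 − π)·r)² = t` has exactly one solution `π` in
the interval `(r/(S + r), 1)`, namely `π = (√(r/t) + r)/(S + r)`. -/
theorem first_order_condition_unique_solution (S r t : ℝ) (hS : 0 < S)
    (hr : 0 < r) (ht : 0 < t) (h : r < t * S ^ 2) :
    (Real.sqrt (r / t) + r) / (S + r) ∈ Set.Ioo (r / (S + r)) 1 ∧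
    ∀ π : ℝ, π ∈ Set.Ioo (r / (S + r)) 1 →
      (r / (S * π - (1 - π) * r) ^ 2 = t ↔
        π = (Real.sqrt (r / t) + r) / (S + r)) := by
  have hSr : 0 < S + r := add_pos hS hr
  refine ⟨add_div_mem_Ioo hSr (Real.sqrt_pos.2 (div_pos hr ht))
    (sqrt_div_lt_of_lt_mul_sq ht hS h), fun π hπ => ?_⟩
  rw [div_sq_eq_iff_eq_sqrt ht (effective_capacity_pos hSr hπ.1), effective_capacity_eq_iff hSr]
end
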